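/- arXiv:2502.10155 — 3 statements merged into one kernel-verified Lean document; each statement's English description precedes it below -/
import Mathlib

section
/- Any magma of size n that is minimal with respect to the set of all transpositions (A ⪯ τ(A) for every transposition τ ∈ S_n) satisfies the least number heuristic: for every cell index i (in the fixed vectorization order), the value A(r_i, c_i) is at most one greater than the maximum among all row indices, column indices, and values appearing in cells with index < i together with the indices r_i, c_i. -/
/-- The isomorphic copy `π(A)` of a magma `A` under a permutation `π`. -/
def magCopy {n : ℕ} (π : Equiv.Perm (Fin n)) (A : Fin n → Fin n → Fin n) :
    Fin n → Fin n → Fin n :=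
  fun a b => π (A (π.symm a) (π.symm b))

/-- The vectorization of a magma's multiplication table, as a lex-ordered vector. -/
def magVec {n : ℕ} (v : Fin (n * n) ≃ Fin n × Fin n) (A : Fin n → Fin n → Fin n) :
    Lex (Fin (n * n) → Fin n) :=
  toLex fun i => A (v i).1 (v i).2

/-- The maximum of all "seen" domain elements at cell index `i`: the row and
column indices of the current cell, together with all row indices, column
indices and values of earlier cells. -/
def seenMax {n : ℕ} (v : Fin (n * n) ≃ Fin n × Fin n)
    (A : Fin n → Fin n → Fin n) (i : Fin (n * n)) : ℕ :=
  max (max ((v i).1 : ℕ) ((v i).2 : ℕ))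
    ((Finset.univ.filter (fun j => j < i)).sup
      (fun j => max (max ((v j).1 : ℕ) ((v j).2 : ℕ)) ((A (v j).1 (v j).2 : ℕ))))

/-- The least number heuristic: reading the cells in vectorization order, each
value is at most one greater than the maximum of all previously seen elements. -/
def LNH {n : ℕ} (v : Fin (n * n) ≃ Fin n × Fin n)
    (A : Fin n → Fin n → Fin n) : Prop :=
  ∀ i : Fin (n * n), (A (v i).1 (v i).2 : ℕ) ≤ seenMax v A i + 1

/-- `A` is minimal with respect to the set of all transpositions. -/
def TranspMinimal {n : ℕ} (v : Fin (n * n) ≃ Fin n × Fin n)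
    (A : Fin n → Fin n → Fin n) : Prop :=
  ∀ a b : Fin n, a ≠ b → magVec v A ≤ magVec v (magCopy (Equiv.swap a b) A)

/-- Any magma minimal with respect to the set of all transpositions satisfies
the least number heuristic. -/
theorem stmt_12 {n : ℕ} (v : Fin (n * n) ≃ Fin n × Fin n)
    (A : Fin n → Fin n → Fin n) (h : TranspMinimal v A) : LNH v A := by
  intro i
  by_contra hlt
  push_neg at hlt
  set M := seenMax v A i with hM
  set m : Fin n := A (v i).1 (v i).2 with hm
  have hMn : M + 1 < n := by have := m.isLt; omega
  set s : Fin n := ⟨M + 1, hMn⟩ with hs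
  have hsm : s ≠ m := by
    intro hsm
    rw [Fin.ext_iff] at hsm
    simp only [hs] at hsm
    omega
  set τ := Equiv.swap s m with hτ
  -- τ fixes every x ≤ M
  have hfix : ∀ x : Fin n, (x : ℕ) ≤ M → τ x = x := by
    intro x hx
    apply Equiv.swap_apply_of_ne_of_ne
    · intro hxs; rw [hxs] at hx; simp [hs] at hx
    · intro hxm; rw [hxm] at hx; omega
  have hfix' : ∀ x : Fin n, (x : ℕ) ≤ M → τ.symm x = x := by
    intro x hx
    rw [hτ, Equiv.symm_swap]
    exact hfix x hx
  -- seen bounds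
  have hr : ((v i).1 : ℕ) ≤ M := le_trans (le_max_left _ _) (le_max_left _ _)
  have hc : ((v i).2 : ℕ) ≤ M := le_trans (le_max_right _ _) (le_max_left _ _)
  have hprev : ∀ j : Fin (n * n), j < i →
      ((v j).1 : ℕ) ≤ M ∧ ((v j).2 : ℕ) ≤ M ∧ ((A (v j).1 (v j).2 : ℕ)) ≤ M := by
    intro j hj
    have hmem : j ∈ Finset.univ.filter (fun k => k < i) := by
      rw [Finset.mem_filter]; exact ⟨Finset.mem_univ _, hj⟩
    have hsup0 := Finset.le_sup (f := fun k => max (max ((v k).1 : ℕ) ((v k).2 : ℕ))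
      ((A (v k).1 (v k).2 : ℕ))) hmem
    have hsup : max (max ((v j).1 : ℕ) ((v j).2 : ℕ)) ((A (v j).1 (v j).2 : ℕ)) ≤ M := by
      rw [hM, seenMax]
      exact le_trans hsup0 (le_max_right _ _)
    refine ⟨?_, ?_, ?_⟩ <;> [skip; skip; skip] <;>
      simp only [max_le_iff] at hsup <;> omega
  -- the copy is lex smaller
  have hlt2 : magVec v (magCopy τ A) < magVec v A := by
    refine ⟨i, ?_, ?_⟩
    · intro j hj
      obtain ⟨h1, h2, h3⟩ := hprev j hj
      show magCopy τ A (v j).1 (v j).2 = A (v j).1 (v j).2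
      rw [magCopy, hfix' _ h1, hfix' _ h2, hfix _ h3]
    · show magCopy τ A (v i).1 (v i).2 < A (v i).1 (v i).2
      rw [magCopy, hfix' _ hr, hfix' _ hc, ← hm]
      have : τ m = s := by rw [hτ, Equiv.swap_apply_right]
      rw [this]
      rw [Fin.lt_iff_val_lt_val]
      simp only [hs]
      omega
  exact absurd hlt2 (not_lt_of_ge (h s m hsm))
end

section
/- Hence the least number heuristic is a strictly weaker symmetry break than minimality with respect to all transpositions: every transposition-minimal magma satisfies LNH, but there is an LNH-satisfying magma of order 4 that is not transposition-minimal. -/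
section Vectorization

variable {n : ℕ} (v : Fin (n * n) ≃ Fin n × Fin n) (A : Fin n → Fin n → Fin n)

theorem row_le_seenMax (i : Fin (n * n)) : ((v i).1 : ℕ) ≤ seenMax v A i :=
  (le_max_left _ _).trans (le_max_left _ _)

theorem col_le_seenMax (i : Fin (n * n)) : ((v i).2 : ℕ) ≤ seenMax v A i :=
  (le_max_right _ _).trans (le_max_left _ _)

theorem le_seenMax_of_lt {i j : Fin (n * n)} (hji : j < i) :
    ((v j).1 : ℕ) ≤ seenMax v A i ∧ ((v j).2 : ℕ) ≤ seenMax v A i ∧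
      (A (v j).1 (v j).2 : ℕ) ≤ seenMax v A i := by
  have hcell : max (max ((v j).1 : ℕ) ((v j).2 : ℕ)) (A (v j).1 (v j).2 : ℕ) ≤ seenMax v A i :=
    (Finset.le_sup (f := fun j => max (max ((v j).1 : ℕ) ((v j).2 : ℕ)) (A (v j).1 (v j).2 : ℕ))
      (by simpa using hji)).trans (le_max_right _ _)
  simp only [max_le_iff] at hcell
  exact ⟨hcell.1.1, hcell.1.2, hcell.2⟩

theorem magCopy_apply_of_fixed (π : Equiv.Perm (Fin n)) {a b : Fin n} (ha : π a = a)
    (hb : π b = b) (hab : π (A a b) = A a b) : magCopy π A a b = A a b := by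
  rw [magCopy, π.symm_apply_eq.mpr ha.symm, π.symm_apply_eq.mpr hb.symm, hab]

theorem magVec_lt_of_agree_before {B : Fin n → Fin n → Fin n} (i : Fin (n * n))
    (hagree : ∀ j < i, B (v j).1 (v j).2 = A (v j).1 (v j).2)
    (hlt : B (v i).1 (v i).2 < A (v i).1 (v i).2) : magVec v B < magVec v A :=
  ⟨i, hagree, hlt⟩

theorem swap_apply_of_val_le {M : ℕ} {m : Fin n} (hm : M + 1 < m) (hMn : M + 1 < n) {x : Fin n}
    (hx : (x : ℕ) ≤ M) : Equiv.swap ⟨M + 1, hMn⟩ m x = x :=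
  Equiv.swap_apply_of_ne_of_ne (Fin.ne_of_val_ne (Nat.lt_succ_of_le hx).ne)
    (Fin.ne_of_val_ne (by omega))

theorem lnh_of_transpMinimal (hmin : TranspMinimal v A) : LNH v A := by
  intro i
  by_contra! hbig
  set M := seenMax v A i
  set m := A (v i).1 (v i).2
  have hMn : M + 1 < n := hbig.trans m.isLt
  set τ := Equiv.swap (⟨M + 1, hMn⟩ : Fin n) m
  have hfix : ∀ x : Fin n, (x : ℕ) ≤ M → τ x = x := fun x hx => swap_apply_of_val_le hbig hMn hx
  have hsmaller : magVec v (magCopy τ A) < magVec v A := by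
    refine magVec_lt_of_agree_before v A i (fun j hji => ?_) ?_
    · obtain ⟨hrow, hcol, hval⟩ := le_seenMax_of_lt v A hji
      exact magCopy_apply_of_fixed A τ (hfix _ hrow) (hfix _ hcol) (hfix _ hval)
    · rw [magCopy, Equiv.symm_swap, hfix _ (row_le_seenMax v A i), hfix _ (col_le_seenMax v A i),
        Equiv.swap_apply_right]
      exact hbig
  exact hsmaller.not_ge (hmin _ _ (Fin.ne_of_val_ne hbig.ne))

end Vectorization

def lnhNotMinimalMagma : Fin 4 → Fin 4 → Fin 4 := fun a b =>
  if a = 0 then b else if a = 1 ∧ b = 0 then 3 else 0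

theorem lnh_lnhNotMinimalMagma :
    LNH (finProdFinEquiv.symm : Fin (4 * 4) ≃ Fin 4 × Fin 4) lnhNotMinimalMagma := by
  unfold LNH
  decide

theorem not_transpMinimal_lnhNotMinimalMagma :
    ¬ TranspMinimal (finProdFinEquiv.symm : Fin (4 * 4) ≃ Fin 4 × Fin 4) lnhNotMinimalMagma := by
  intro hmin
  have hsmaller : magVec finProdFinEquiv.symm (magCopy (Equiv.swap 1 2) lnhNotMinimalMagma) <
      magVec finProdFinEquiv.symm lnhNotMinimalMagma :=
    magVec_lt_of_agree_before _ _ 4 (by decide) (by decide)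
  exact hsmaller.not_ge (hmin 1 2 (by decide))

/-- The least number heuristic is a strictly weaker symmetry break than
minimality with respect to all transpositions: every transposition-minimal
magma satisfies LNH, but there is an LNH-satisfying magma of order 4 that is
not transposition-minimal (row-by-row ordering). -/
theorem stmt_14 :
    (∀ (n : ℕ) (A : Fin n → Fin n → Fin n),
        TranspMinimal (finProdFinEquiv.symm : Fin (n * n) ≃ Fin n × Fin n) A →
        LNH (finProdFinEquiv.symm : Fin (n * n) ≃ Fin n × Fin n) A) ∧
    (∃ A : Fin 4 → Fin 4 → Fin 4,
        LNH (finProdFinEquiv.symm : Fin (4 * 4) ≃ Fin 4 × Fin 4) A ∧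
        ¬ TranspMinimal (finProdFinEquiv.symm : Fin (4 * 4) ≃ Fin 4 × Fin 4) A) :=
  ⟨fun _ A => lnh_of_transpMinimal _ A,
    lnhNotMinimalMagma, lnh_lnhNotMinimalMagma, not_transpMinimal_lnhNotMinimalMagma⟩
end

section
/- If A is a lex-leader model of F_G on domain {0,...,|V|} under row-by-row ordering, then the {1,...,|V|} × {1,...,|V|} sub-table of A, with entry (i,j) marked 1 iff i *_A j ≠ 0, is the adjacency matrix of G under the vertex labeling v ↦ A(v): specifically A(v1) *_A A(v2) ≠ 0 iff {v1,v2} ∈ E. -/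
/-- If `A` is a lex-leader model of `F_G` on the domain `{0, …, |V|}` under the
row-by-row ordering, then the sub-table on the vertex interpretations describes
the adjacency matrix of `G`: `A (ι v₁) (ι v₂) ≠ 0` iff `{v₁, v₂}` is an edge. -/
theorem stmt_17 {m : ℕ} (G : SimpleGraph (Fin m))
    (A : Fin (m + 1) → Fin (m + 1) → Fin (m + 1))
    (c : Fin (m + 1)) (ι : Fin m → Fin (m + 1))
    (h1 : ∀ x, A c x = c ∧ A x c = c)
    (h2 : ∀ x, A x x = c)
    (h3 : Function.Injective ι ∧ ∀ v, ι v ≠ c)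
    (h4 : ∀ v w, G.Adj v w → A (ι v) (ι w) ≠ c)
    (h5 : ∀ v w, v ≠ w → ¬ G.Adj v w → A (ι v) (ι w) = c)
    (hlex : ∀ π : Equiv.Perm (Fin (m + 1)),
      magVec (finProdFinEquiv.symm : Fin ((m + 1) * (m + 1)) ≃ Fin (m + 1) × Fin (m + 1)) A ≤
      magVec (finProdFinEquiv.symm : Fin ((m + 1) * (m + 1)) ≃ Fin (m + 1) × Fin (m + 1))
        (magCopy π A)) :
    ∀ v₁ v₂ : Fin m, A (ι v₁) (ι v₂) ≠ 0 ↔ G.Adj v₁ v₂ := by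
  have hN : 0 < (m + 1) * (m + 1) := Nat.mul_pos (Nat.succ_pos m) (Nat.succ_pos m)
  have hc : c = 0 := by
    by_contra hc
    set π := Equiv.swap c (0 : Fin (m + 1)) with hπ
    have h := hlex π
    have hz : (finProdFinEquiv.symm (⟨0, hN⟩ : Fin ((m + 1) * (m + 1)))) =
        ((0 : Fin (m + 1)), (0 : Fin (m + 1))) := by
      ext <;> simp [finProdFinEquiv, Fin.divNat, Fin.modNat]
    have hBlt : magVec (finProdFinEquiv.symm :
          Fin ((m + 1) * (m + 1)) ≃ Fin (m + 1) × Fin (m + 1)) (magCopy π A) <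
        magVec (finProdFinEquiv.symm :
          Fin ((m + 1) * (m + 1)) ≃ Fin (m + 1) × Fin (m + 1)) A := by
      refine ⟨⟨0, hN⟩, fun j hj => ?_, ?_⟩
      · exact absurd hj (by simp [Fin.lt_def])
      · show magCopy π A (finProdFinEquiv.symm ⟨0, hN⟩).1 (finProdFinEquiv.symm ⟨0, hN⟩).2 <
          A (finProdFinEquiv.symm ⟨0, hN⟩).1 (finProdFinEquiv.symm ⟨0, hN⟩).2
        rw [hz]
        have hs0 : π.symm (0 : Fin (m + 1)) = c := by
          simp [hπ, Equiv.symm_swap, Equiv.swap_apply_right]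
        have : magCopy π A 0 0 = 0 := by
          simp [magCopy, hs0, h2, hπ, Equiv.swap_apply_left]
        rw [this, h2]
        exact Fin.pos_of_ne_zero hc
    exact absurd hBlt h.not_gt
  subst hc
  intro v₁ v₂
  constructor
  · intro hne
    by_contra hadj
    rcases eq_or_ne v₁ v₂ with rfl | hvne
    · exact hne (h2 _)
    · exact hne (h5 _ _ hvne hadj)
  · intro hadj
    exact h4 _ _ hadj
end
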